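/- Let m ≥ 3 be an odd integer and let p, p+2 be a pair of twin primes, and write q = p + 2. Then either ±2^{(p−1)/2}·(1 + √(1 − 2m^p)) is not a p-th power of any element of the ring of integers of ℚ(√(1 − 2m^p)), or ±2^{(q−1)/2}·(1 + √(1 − 2m^q)) is not a q-th power of any element of the ring of integers of ℚ(√(1 − 2m^q)). (Here '±γ is not an n-th power' means that neither γ nor −γ equals β^n for any β in the relevant ring of integers.) -/

import Mathlib

open Polynomial NumberField

/-- A fixed choice of complex square root of the integer `d`. -/
noncomputable def sqrtC (d : ℤ) : ℂ := (d : ℂ) ^ ((1 : ℂ) / 2)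

lemma sqrtC_sq (d : ℤ) : sqrtC d ^ 2 = (d : ℂ) := by
  unfold sqrtC
  rcases eq_or_ne (d : ℂ) 0 with h | h
  · rw [h, Complex.zero_cpow (by norm_num : (1 : ℂ) / 2 ≠ 0)]
    simp
  · rw [pow_two, ← Complex.cpow_add _ _ h]
    norm_num

lemma isIntegral_sqrtC (d : ℤ) : IsIntegral ℚ (sqrtC d) := by
  refine ⟨X ^ 2 - C (d : ℚ), monic_X_pow_sub_C _ two_ne_zero, ?_⟩
  have : (Polynomial.aeval (sqrtC d)) (X ^ 2 - C (d : ℚ)) = 0 := by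
    simp [sqrtC_sq]
  simpa [Polynomial.aeval_def] using this

/-- The (number) field `ℚ(√d)`, realized as a subfield of `ℂ`. -/
noncomputable def Qsqrt (d : ℤ) : IntermediateField ℚ ℂ :=
  IntermediateField.adjoin ℚ {sqrtC d}

instance (d : ℤ) : FiniteDimensional ℚ (Qsqrt d) :=
  IntermediateField.adjoin.finiteDimensional (isIntegral_sqrtC d)

instance (d : ℤ) : NumberField (Qsqrt d) := ⟨⟩

/-- The element `√d` of `ℚ(√d)`. -/
noncomputable def sqrtElem (d : ℤ) : Qsqrt d :=
  ⟨sqrtC d, IntermediateField.mem_adjoin_simple_self ℚ (sqrtC d)⟩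

/-!
Let `D = 1 - 2 m ^ r < 0`, so that complex conjugation acts on `ℚ(√D)` as `√D ↦ -√D`. If
`β ^ r = ±2 ^ k (1 + √D)` with `r = 2k + 1`, then the trace `T = β + β̄` and the norm `N = β β̄`
are rational integers with `N ^ r = 4 ^ k (1 - D) = (2m) ^ r`, so `N = 2m`, and
`T ∣ β ^ r + β̄ ^ r = ±2 ^ (k + 1)`, so `|T| = 2 ^ e`. As `T ^ 2 - 4N = (β - β̄) ^ 2` is `D` times
a rational square, `D (T ^ 2 - 8m)` is a square: impossible mod 4 if `e = 0` and mod 16 if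
`e ≥ 2`, while for `e = 1` it says that `(2m - 1)(2m ^ r - 1)` is a square.

If both `(2m - 1)(2m ^ p - 1) = k₁ ^ 2` and `(2m - 1)(2m ^ (p + 2) - 1) = k₂ ^ 2`, then
`k₂ ^ 2 - m ^ 2 k₁ ^ 2 = (2m - 1)(m ^ 2 - 1) > 0` forces `k₂ ≤ (2m - 1)(m ^ 2 - 1)`, too small for
`k₂ ^ 2 ≥ (2m - 1)(2m ^ 5 - 1)`.
-/

lemma exists_intCast_eq_of_isIntegral {K : Type*} [Field K] [CharZero K] {x : ℚ}
    (hx : IsIntegral ℤ (x : K)) : ∃ n : ℤ, (n : ℚ) = x := by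
  rw [← eq_ratCast (algebraMap ℚ K), isIntegral_algebraMap_iff (algebraMap ℚ K).injective] at hx
  exact IsIntegrallyClosed.isIntegral_iff.mp hx

lemma Int.dvd_of_isIntegral_of_eq_mul {K : Type*} [Field K] [CharZero K] {a b : ℤ} {z : K}
    (hz : IsIntegral ℤ z) (h : (b : K) = a * z) : a ∣ b := by
  rcases eq_or_ne a 0 with rfl | ha
  · rw [Int.cast_zero, zero_mul, Int.cast_eq_zero] at h
    simp [h]
  have haK : (a : K) ≠ 0 := by exact_mod_cast ha
  obtain ⟨c, hc⟩ := exists_intCast_eq_of_isIntegral (K := K) (x := b / a)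
    (by rwa [Rat.cast_div, Rat.cast_intCast, Rat.cast_intCast, h, mul_div_cancel_left₀ _ haK])
  refine ⟨c, ?_⟩
  have : (b : ℚ) = a * c := by rw [hc]; field_simp
  exact_mod_cast this

lemma isSquare_mul_of_sq_mul_eq {d c : ℤ} {u : ℚ} (h : u ^ 2 * d = c) : IsSquare (d * c) := by
  rw [← Rat.isSquare_intCast_iff]
  exact ⟨u * d, by push_cast; rw [← h]; ring⟩

lemma Int.emod_four_ne_three_of_isSquare {n : ℤ} (h : IsSquare n) : n % 4 ≠ 3 := by
  obtain ⟨k, rfl⟩ := h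
  rcases Int.even_or_odd k with hk | hk
  · obtain ⟨j, rfl⟩ := hk
    rw [show (j + j) * (j + j) = 4 * (j * j) by ring]
    omega
  · rw [← pow_two, Int.sq_mod_four_eq_one_of_odd hk]
    decide

lemma Int.emod_sixteen_ne_eight_of_isSquare {n : ℤ} (h : IsSquare n) : n % 16 ≠ 8 := by
  obtain ⟨k, rfl⟩ := h
  have h0 : 0 ≤ k % 16 := Int.emod_nonneg k (by norm_num)
  have h1 : k % 16 < 16 := Int.emod_lt_of_pos k (by norm_num)
  rw [Int.mul_emod]
  interval_cases k % 16 <;> decide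

lemma starRingEnd_sqrtC_of_neg {d : ℤ} (hd : d < 0) : starRingEnd ℂ (sqrtC d) = -sqrtC d := by
  have h := Complex.ext_iff.mp (sqrtC_sq d)
  simp only [pow_two, Complex.mul_re, Complex.mul_im, Complex.intCast_re, Complex.intCast_im] at h
  have hd' : (d : ℝ) < 0 := by exact_mod_cast hd
  have hre : (sqrtC d).re = 0 := by
    rcases mul_eq_zero.mp (show (sqrtC d).re * (sqrtC d).im = 0 by linarith [h.2]) with h' | h'
    · exact h'
    · nlinarith [h.1, sq_nonneg (sqrtC d).re]
  apply Complex.ext <;> simp [hre]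

lemma exists_rat_eq_add_mul_sqrtC {d : ℤ} {w : ℂ} (hw : w ∈ Qsqrt d) :
    ∃ x y : ℚ, w = x + y * sqrtC d := by
  have hs := sqrtC_sq d
  rw [← IntermediateField.mem_toSubalgebra, Qsqrt,
    IntermediateField.adjoin_simple_toSubalgebra_of_isAlgebraic (isIntegral_sqrtC d).isAlgebraic]
    at hw
  induction hw using Algebra.adjoin_induction with
  | mem w hw => obtain rfl := Set.mem_singleton_iff.mp hw; exact ⟨0, 1, by simp⟩
  | algebraMap q => exact ⟨q, 0, by simp⟩
  | add w w' _ _ h h' =>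
    obtain ⟨x, y, rfl⟩ := h
    obtain ⟨x', y', rfl⟩ := h'
    exact ⟨x + x', y + y', by push_cast; ring⟩
  | mul w w' _ _ h h' =>
    obtain ⟨x, y, rfl⟩ := h
    obtain ⟨x', y', rfl⟩ := h'
    exact ⟨x * x' + y * y' * d, x * y' + y * x', by push_cast; linear_combination (y : ℂ) * y' * hs⟩

lemma IsIntegral.starRingEnd {z : ℂ} (hz : IsIntegral ℤ z) : IsIntegral ℤ (starRingEnd ℂ z) :=
  hz.map (_root_.starRingEnd ℂ).toIntAlgHom

lemma exists_trace_norm_of_mem_Qsqrt {d : ℤ} (hd : d < 0) {b : ℂ} (hb : b ∈ Qsqrt d)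
    (hint : IsIntegral ℤ b) :
    ∃ T N : ℤ, ∃ u : ℚ, b + starRingEnd ℂ b = T ∧ b * starRingEnd ℂ b = N ∧
      u ^ 2 * d = T ^ 2 - 4 * N := by
  obtain ⟨x, y, rfl⟩ := exists_rat_eq_add_mul_sqrtC hb
  have hconj : starRingEnd ℂ (x + y * sqrtC d) = x - y * sqrtC d := by
    simp [starRingEnd_sqrtC_of_neg hd, sub_eq_add_neg]
  have hint' := hint.starRingEnd
  have htrace : (x + y * sqrtC d) + starRingEnd ℂ (x + y * sqrtC d) = ((2 * x : ℚ) : ℂ) := by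
    rw [hconj]; push_cast; ring
  have hnorm :
      (x + y * sqrtC d) * starRingEnd ℂ (x + y * sqrtC d) = ((x ^ 2 - y ^ 2 * d : ℚ) : ℂ) := by
    rw [hconj]; push_cast; linear_combination (-(y : ℂ) ^ 2) * sqrtC_sq d
  obtain ⟨T, hT⟩ := exists_intCast_eq_of_isIntegral (htrace ▸ hint.add hint')
  obtain ⟨N, hN⟩ := exists_intCast_eq_of_isIntegral (hnorm ▸ hint.mul hint')
  refine ⟨T, N, 2 * y, ?_, ?_, ?_⟩
  · rw [htrace, ← hT]; push_cast; rfl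
  · rw [hnorm, ← hN]; push_cast; rfl
  · rw [hT, hN]; ring

lemma exists_trace_norm_of_pow_eq {d : ℤ} (hd : d < 0) {b : ℂ} (hb : b ∈ Qsqrt d)
    (hint : IsIntegral ℤ b) {r : ℕ} (hr : Odd r) {c : ℤ}
    (h : b ^ r = c * (1 + sqrtC d)) :
    ∃ T N : ℤ, ∃ u : ℚ, T ∣ 2 * c ∧ N ^ r = c ^ 2 * (1 - d) ∧ u ^ 2 * d = T ^ 2 - 4 * N := by
  obtain ⟨T, N, u, hT, hN, hu⟩ := exists_trace_norm_of_mem_Qsqrt hd hb hint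
  have hconj : starRingEnd ℂ b ^ r = c * (1 - sqrtC d) := by
    rw [← map_pow, h]; simp [starRingEnd_sqrtC_of_neg hd, sub_eq_add_neg]
  refine ⟨T, N, u, ?_, ?_, hu⟩
  · obtain ⟨F, hF⟩ := Odd.add_dvd_pow_add_pow (⟨b, hint⟩ : integralClosure ℤ ℂ)
      ⟨starRingEnd ℂ b, hint.starRingEnd⟩ hr
    refine Int.dvd_of_isIntegral_of_eq_mul F.2 ?_
    have hF' := congrArg Subtype.val hF
    push_cast at hF' ⊢
    rw [← hT, ← hF', h, hconj]
    ring
  · have : ((N ^ r : ℤ) : ℂ) = ((c ^ 2 * (1 - d) : ℤ) : ℂ) := by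
      push_cast
      rw [← hN, mul_pow, h, hconj]
      linear_combination (-(c : ℂ) ^ 2) * sqrtC_sq d
    exact_mod_cast this

lemma isSquare_of_sq_mul_eq_sq_sub {m M T : ℤ} {e : ℕ} (hm : Odd m) (hM : Odd M)
    (hT : T.natAbs = 2 ^ e) {u : ℚ} (hu : u ^ 2 * (1 - 2 * M) = T ^ 2 - 8 * m) :
    IsSquare ((2 * m - 1) * (2 * M - 1)) := by
  have hT2 : (T : ℚ) ^ 2 = 4 ^ e := by
    rw [← Int.cast_pow, ← Int.natAbs_sq, hT]
    push_cast
    rw [← pow_mul, mul_comm, pow_mul]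
    norm_num
  rw [hT2] at hu
  rcases e with _ | _ | e
  · have hsq := isSquare_mul_of_sq_mul_eq (u := u) (d := 1 - 2 * M) (c := 1 - 8 * m)
      (by push_cast at hu ⊢; linear_combination hu)
    refine absurd ?_ (Int.emod_four_ne_three_of_isSquare hsq)
    obtain ⟨a, rfl⟩ := hm
    obtain ⟨b, rfl⟩ := hM
    rw [Int.mul_emod, show (1 - 2 * (2 * b + 1)) % 4 = 3 by omega,
      show (1 - 8 * (2 * a + 1)) % 4 = 1 by omega]
    decide
  · have hsq := isSquare_mul_of_sq_mul_eq (u := u / 2) (d := 1 - 2 * M) (c := 1 - 2 * m)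
      (by push_cast at hu ⊢; linear_combination hu / 4)
    convert hsq using 1
    ring
  · have hsq := isSquare_mul_of_sq_mul_eq (u := u) (d := 1 - 2 * M) (c := 16 * 4 ^ e - 8 * m)
      (by push_cast at hu ⊢; linear_combination hu)
    refine absurd ?_ (Int.emod_sixteen_ne_eight_of_isSquare hsq)
    obtain ⟨t, ht⟩ : Odd ((1 - 2 * M) * (2 * 4 ^ e - m)) :=
      (odd_one.sub_even (even_two_mul M)).mul ((even_two_mul _).sub_odd hm)
    rw [show (1 - 2 * M) * (16 * 4 ^ e - 8 * m) = 8 * ((1 - 2 * M) * (2 * 4 ^ e - m)) by ring, ht]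
    omega

lemma not_isSquare_and_isSquare {m : ℤ} (hm : 2 ≤ m) {n : ℕ} (hn : 3 ≤ n) :
    ¬ (IsSquare ((2 * m - 1) * (2 * m ^ n - 1)) ∧
      IsSquare ((2 * m - 1) * (2 * m ^ (n + 2) - 1))) := by
  rintro ⟨⟨k₁, hk₁⟩, ⟨k₂, hk₂⟩⟩
  rw [← abs_mul_abs_self] at hk₁ hk₂
  set x := |k₁|
  set y := |k₂|
  have hx : 0 ≤ x := abs_nonneg k₁
  have hy : 0 ≤ y := abs_nonneg k₂
  have hdiff : (y - m * x) * (y + m * x) = (2 * m - 1) * (m ^ 2 - 1) := by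
    rw [pow_add] at hk₂
    linear_combination m ^ 2 * hk₁ - hk₂
  have hpos : 0 < (2 * m - 1) * (m ^ 2 - 1) := by nlinarith
  have hlt : m * x < y := by nlinarith
  have hmx : 0 ≤ m * x := by positivity
  have hy_le : y ≤ (2 * m - 1) * (m ^ 2 - 1) := by
    nlinarith [mul_le_mul_of_nonneg_right (show 1 ≤ y - m * x by linarith)
      (by linarith : 0 ≤ y + m * x)]
  have hm5 : m ^ 5 ≤ m ^ (n + 2) := pow_le_pow_right₀ (by linarith) (by omega)
  have hy_sq : y * y ≤ (2 * m - 1) * (m ^ 2 - 1) * ((2 * m - 1) * (m ^ 2 - 1)) :=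
    mul_le_mul hy_le hy_le hy hpos.le
  nlinarith

lemma coe_sqrtElem (d : ℤ) : ((sqrtElem d : Qsqrt d) : ℂ) = sqrtC d := rfl

lemma isSquare_of_pow_eq_two_pow_mul_one_add_sqrtElem {m : ℤ} (hm0 : 0 < m) (hm : Odd m)
    {r : ℕ} (hr : Odd r) (β : 𝓞 (Qsqrt (1 - 2 * m ^ r)))
    (hβ : (β : Qsqrt (1 - 2 * m ^ r)) ^ r = 2 ^ ((r - 1) / 2) * (1 + sqrtElem (1 - 2 * m ^ r)) ∨
      (β : Qsqrt (1 - 2 * m ^ r)) ^ r = -(2 ^ ((r - 1) / 2) * (1 + sqrtElem (1 - 2 * m ^ r)))) :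
    IsSquare ((2 * m - 1) * (2 * m ^ r - 1)) := by
  obtain ⟨c, hc, hβc⟩ : ∃ c : ℤ, c.natAbs = 2 ^ ((r - 1) / 2) ∧
      ((β : Qsqrt (1 - 2 * m ^ r)) : ℂ) ^ r = c * (1 + sqrtC (1 - 2 * m ^ r)) := by
    rcases hβ.imp (congrArg ((↑) : Qsqrt (1 - 2 * m ^ r) → ℂ))
      (congrArg ((↑) : Qsqrt (1 - 2 * m ^ r) → ℂ)) with h | h <;> push_cast [coe_sqrtElem] at h
    · exact ⟨2 ^ ((r - 1) / 2), by simp [Int.natAbs_pow], by rw [h]; norm_cast⟩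
    · exact ⟨-2 ^ ((r - 1) / 2), by simp [Int.natAbs_pow], by rw [h]; norm_cast; push_cast; ring⟩
  have hD : 1 - 2 * m ^ r < 0 := by have := pow_pos hm0 r; omega
  obtain ⟨T, N, u, hT, hN, hu⟩ := exists_trace_norm_of_pow_eq hD (β : Qsqrt _).2
    ((RingOfIntegers.isIntegral_coe β).map (Qsqrt _).val) hr hβc
  have hN2m : N = 2 * m := by
    refine hr.strictMono_pow.injective (hN.trans ?_)
    obtain ⟨k, rfl⟩ := hr
    rw [← Int.natAbs_sq, hc, show (2 * k + 1 - 1) / 2 = k by omega]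
    push_cast
    ring
  obtain ⟨e, -, hTe⟩ := (Nat.dvd_prime_pow Nat.prime_two).mp
    (show T.natAbs ∣ 2 ^ ((r - 1) / 2 + 1) by
      simpa [Int.natAbs_mul, hc, pow_succ, mul_comm] using Int.natAbs_dvd_natAbs.mpr hT)
  rw [hN2m] at hu
  exact isSquare_of_sq_mul_eq_sq_sub hm hm.pow hTe (u := u) (by push_cast at hu ⊢; linarith)

/-- If `m ≥ 3` is odd and `p`, `q = p + 2` are twin primes, then
`±2 ^ ((p-1)/2) (1 + √(1 - 2 m ^ p))` is not a `p`-th power in the ring of integers of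
`ℚ(√(1 - 2 m ^ p))`, or `±2 ^ ((q-1)/2) (1 + √(1 - 2 m ^ q))` is not a `q`-th power in the
ring of integers of `ℚ(√(1 - 2 m ^ q))`. -/
theorem twin_primes_not_pth_power
    (m : ℤ) (hm : 3 ≤ m) (hmodd : Odd m)
    (p q : ℕ) (hp : p.Prime) (hq : q.Prime) (hpq : q = p + 2) :
    (¬ ∃ β : 𝓞 (Qsqrt (1 - 2 * m ^ p)),
        (β : Qsqrt (1 - 2 * m ^ p)) ^ p =
            2 ^ ((p - 1) / 2) * (1 + sqrtElem (1 - 2 * m ^ p)) ∨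
        (β : Qsqrt (1 - 2 * m ^ p)) ^ p =
            -(2 ^ ((p - 1) / 2) * (1 + sqrtElem (1 - 2 * m ^ p)))) ∨
    (¬ ∃ β : 𝓞 (Qsqrt (1 - 2 * m ^ q)),
        (β : Qsqrt (1 - 2 * m ^ q)) ^ q =
            2 ^ ((q - 1) / 2) * (1 + sqrtElem (1 - 2 * m ^ q)) ∨
        (β : Qsqrt (1 - 2 * m ^ q)) ^ q =
            -(2 ^ ((q - 1) / 2) * (1 + sqrtElem (1 - 2 * m ^ q)))) := by
  by_contra! h
  obtain ⟨⟨β, hβ⟩, ⟨γ, hγ⟩⟩ := h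
  have hp2 : p ≠ 2 := by
    rintro rfl
    exact absurd (hpq ▸ hq) (by decide)
  have hpodd : Odd p := hp.odd_of_ne_two hp2
  have hm0 : 0 < m := by linarith
  subst hpq
  refine not_isSquare_and_isSquare (by linarith) (n := p) (by have := hp.two_le; omega) ⟨?_, ?_⟩
  · exact isSquare_of_pow_eq_two_pow_mul_one_add_sqrtElem hm0 hmodd hpodd β hβ
  · exact isSquare_of_pow_eq_two_pow_mul_one_add_sqrtElem hm0 hmodd (hpodd.add_even even_two) γ hγ
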